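/- (Forward preservation of the branch rule.) For all vs : ℕ → var, constraint sets cs, memories s : ℕ → ℤ, assignments asgn, and expressions e₁ e₂ : SExp, if asgn satisfies cs and vs^asgn ≡ s, then: (a) if e₁^s ≤ e₂^s then asgn satisfies cs ∪ {e₁^vs ≤ e₂^vs}; and (b) if e₂^s < e₁^s then asgn satisfies cs ∪ {e₂^vs < e₁^vs}. -/
import Mathlib


/-- Variables are natural numbers. -/
abbrev Var := ℕ

/-- Binary integer operations: +, −, ×, ÷ (integer division). -/
inductive Op
  | add | sub | mul | div
deriving DecidableEq

def Op.denote : Op → ℤ → ℤ → ℤ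
  | .add => (· + ·)
  | .sub => (· - ·)
  | .mul => (· * ·)
  | .div => (· / ·)

/-- Symbolic server expressions. -/
inductive SExp
  | const : ℤ → SExp
  | read : ℕ → SExp
  | bin : Op → SExp → SExp → SExp
deriving DecidableEq

/-- Evaluation of a server expression on a memory `s : ℕ → ℤ`, written `e^s`. -/
def SExp.eval (s : ℕ → ℤ) : SExp → ℤ
  | .const z => z
  | .read k => s k
  | .bin op e₁ e₂ => op.denote (e₁.eval s) (e₂.eval s)

/-- Validator expressions. -/
inductive VExp
  | const : ℤ → VExp
  | var : Var → VExp
  | bin : Op → VExp → VExp → VExp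
deriving DecidableEq

/-- Evaluation of a validator expression under an assignment, written `e^asgn`. -/
def VExp.eval (asgn : Var → ℤ) : VExp → ℤ
  | .const z => z
  | .var x => asgn x
  | .bin op e₁ e₂ => op.denote (e₁.eval asgn) (e₂.eval asgn)

/-- Symbolization `e^vs` of a server expression: replace every `read src` by `var (vs src)`. -/
def SExp.symb (vs : ℕ → Var) : SExp → VExp
  | .const z => .const z
  | .read k => .var (vs k)
  | .bin op e₁ e₂ => .bin op (e₁.symb vs) (e₂.symb vs)

/-- Comparison operators for constraints: <, ≤, =. -/
inductive Cmp
  | lt | le | eq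
deriving DecidableEq

def Cmp.holds : Cmp → ℤ → ℤ → Prop
  | .lt => (· < ·)
  | .le => (· ≤ ·)
  | .eq => (· = ·)

/-- A constraint is a triple of two validator expressions and a comparison. -/
structure Constraint where
  lhs : VExp
  cmp : Cmp
  rhs : VExp
deriving DecidableEq

/-- `asgn` satisfies the constraint set `cs`. -/
def Sat (asgn : Var → ℤ) (cs : Finset Constraint) : Prop :=
  ∀ c ∈ cs, c.cmp.holds (c.lhs.eval asgn) (c.rhs.eval asgn)

/-- A variable occurs in a validator expression. -/
def VExp.occurs (x : Var) : VExp → Prop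
  | .const _ => False
  | .var y => y = x
  | .bin _ e₁ e₂ => e₁.occurs x ∨ e₂.occurs x

/-- `x` is fresh for the constraint set `cs`: it occurs in no constraint of `cs`. -/
def FreshCs (x : Var) (cs : Finset Constraint) : Prop :=
  ∀ c ∈ cs, ¬ c.lhs.occurs x ∧ ¬ c.rhs.occurs x

/-- `x` is fresh for `vs : ℕ → Var`. -/
def FreshVs (x : Var) (vs : ℕ → Var) : Prop :=
  ∀ k : ℕ, vs k ≠ x

theorem symb_eval (vs : ℕ → Var) (s : ℕ → ℤ) (asgn : Var → ℤ)
    (hrefl : ∀ k : ℕ, asgn (vs k) = s k) (e : SExp) :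
    (e.symb vs).eval asgn = e.eval s := by
  induction e with
  | const z => rfl
  | read k => exact hrefl k
  | bin op a b iha ihb => simp [SExp.symb, VExp.eval, SExp.eval, iha, ihb]

/-- Forward preservation of the branch rule. -/
theorem branch_forward_preservation
    (vs : ℕ → Var) (cs : Finset Constraint) (s : ℕ → ℤ) (asgn : Var → ℤ)
    (e₁ e₂ : SExp)
    (hsat : Sat asgn cs) (hrefl : ∀ k : ℕ, asgn (vs k) = s k) :
    (e₁.eval s ≤ e₂.eval s →
      Sat asgn (insert ⟨e₁.symb vs, Cmp.le, e₂.symb vs⟩ cs)) ∧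
    (e₂.eval s < e₁.eval s →
      Sat asgn (insert ⟨e₂.symb vs, Cmp.lt, e₁.symb vs⟩ cs)) := by
  constructor <;> intro h c hc <;> rcases Finset.mem_insert.mp hc with rfl | hc <;>
    simp_all [Cmp.holds, symb_eval vs s asgn hrefl] <;> exact hsat _ hc
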